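/- (Lemma 1.) Let W be an N×N real matrix with nonnegative entries that is weight-balanced, with Laplacian L = D − W. Let x̂, e ∈ ℝᴺ, set x = x̂ − e, and let u = −L x̂, i.e. u_i = −Σ_j w_{ij}(x̂_i − x̂_j). Let b_i, c_i > 0 for all i and define δ_i = 1 − d_i b_i/2 − Σ_{j=1}^N w_{ij} c_j/2. Then xᵀLᵀu ≤ −Σ_{i=1}^N [ δ_i u_i² − ( d_i/(2 b_i) + d_i/(2 c_i) ) e_i² ], where xᵀLᵀu denotes the inner product of Lx and u. (Since ẋ = u, the left-hand side is the derivative of the Lyapunov function V₂(x) = (1/2) xᵀLᵀx along the event-triggered dynamics.) -/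

import Mathlib

/-!
Since `L x = L x̂ − L e = −u − L e`, we get `xᵀLᵀu = −‖u‖² − (L e)ᵀu`, and
`−(L e)ᵢ uᵢ = ∑ⱼ wᵢⱼ (−eᵢ uᵢ + eⱼ uᵢ)`. Young's inequality with weight `bᵢ` on the first
product and `cⱼ` on the second bounds this by squares of `u` and `e`; the term
`∑ᵢ ∑ⱼ wᵢⱼ eⱼ² / (2cⱼ)` carries column sums of `W`, which weight balance turns into out-degrees.
-/

open Matrix Finset

/-- The out-degree of node `i`: the `i`-th row sum of the weight matrix. -/
def outDeg {N : ℕ} (W : Matrix (Fin N) (Fin N) ℝ) (i : Fin N) : ℝ := ∑ j, W i j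

/-- `W` is weight-balanced if every row sum equals the corresponding column sum. -/
def IsWeightBalanced {N : ℕ} (W : Matrix (Fin N) (Fin N) ℝ) : Prop :=
  ∀ i, (∑ j, W i j) = ∑ j, W j i

/-- The Laplacian `L = D − W`. -/
noncomputable def lap {N : ℕ} (W : Matrix (Fin N) (Fin N) ℝ) : Matrix (Fin N) (Fin N) ℝ :=
  Matrix.diagonal (outDeg W) - W
/-- `δᵢ = 1 − dᵢ bᵢ/2 − ∑ⱼ wᵢⱼ cⱼ/2`. -/
noncomputable def delta {N : ℕ} (W : Matrix (Fin N) (Fin N) ℝ) (b c : Fin N → ℝ)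
    (i : Fin N) : ℝ :=
  1 - outDeg W i * b i / 2 - (∑ j, W i j * c j) / 2

lemma lap_mulVec_apply {N : ℕ} (W : Matrix (Fin N) (Fin N) ℝ) (v : Fin N → ℝ) (i : Fin N) :
    (lap W *ᵥ v) i = ∑ j, W i j * (v i - v j) := by
  rw [lap, Matrix.sub_mulVec, Pi.sub_apply, mulVec_diagonal]
  simp only [mulVec, dotProduct, mul_sub, Finset.sum_sub_distrib, outDeg, Finset.sum_mul]

lemma mul_le_half_mul_sq_add_sq_div {a b ε : ℝ} (hε : 0 < ε) :
    a * b ≤ ε / 2 * b ^ 2 + a ^ 2 / (2 * ε) := by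
  calc a * b = 2 * b * a / 2 := by ring
    _ ≤ (ε * b ^ 2 + ε⁻¹ * a ^ 2) / 2 := by gcongr; exact two_mul_le_add_mul_sq hε
    _ = ε / 2 * b ^ 2 + a ^ 2 / (2 * ε) := by ring

lemma IsWeightBalanced.sum_sum_mul_right {N : ℕ} {W : Matrix (Fin N) (Fin N) ℝ}
    (hWB : IsWeightBalanced W) (f : Fin N → ℝ) :
    ∑ i, ∑ j, W i j * f j = ∑ j, outDeg W j * f j := by
  rw [Finset.sum_comm]
  refine Finset.sum_congr rfl fun j _ => ?_
  rw [← Finset.sum_mul, outDeg, hWB j]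

section LaplacianBound

variable {N : ℕ} {W : Matrix (Fin N) (Fin N) ℝ} (e u : Fin N → ℝ) {b c : Fin N → ℝ}

lemma neg_lap_mulVec_mul_le (hW : ∀ i j, 0 ≤ W i j) (hb : ∀ i, 0 < b i) (hc : ∀ i, 0 < c i)
    (i : Fin N) :
    -(lap W *ᵥ e) i * u i ≤ ∑ j, W i j *
      ((b i / 2 * u i ^ 2 + e i ^ 2 / (2 * b i)) + (c j / 2 * u i ^ 2 + e j ^ 2 / (2 * c j))) := by
  rw [lap_mulVec_apply, ← Finset.sum_neg_distrib, Finset.sum_mul]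
  refine Finset.sum_le_sum fun j _ => ?_
  calc -(W i j * (e i - e j)) * u i = W i j * (-e i * u i + e j * u i) := by ring
    _ ≤ _ := by
      gcongr
      · exact hW i j
      · exact (mul_le_half_mul_sq_add_sq_div (hb i)).trans_eq (by rw [neg_sq])
      · exact mul_le_half_mul_sq_add_sq_div (hc j)

lemma neg_lap_mulVec_dotProduct_le (hW : ∀ i j, 0 ≤ W i j) (hWB : IsWeightBalanced W)
    (hb : ∀ i, 0 < b i) (hc : ∀ i, 0 < c i) :
    -(lap W *ᵥ e) ⬝ᵥ u ≤ ∑ i, ((outDeg W i * b i / 2 + (∑ j, W i j * c j) / 2) * u i ^ 2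
      + (outDeg W i / (2 * b i) + outDeg W i / (2 * c i)) * e i ^ 2) := by
  calc -(lap W *ᵥ e) ⬝ᵥ u = ∑ i, -(lap W *ᵥ e) i * u i := by simp [dotProduct]
    _ ≤ ∑ i, ∑ j, W i j *
        ((b i / 2 * u i ^ 2 + e i ^ 2 / (2 * b i)) + (c j / 2 * u i ^ 2 + e j ^ 2 / (2 * c j))) :=
      Finset.sum_le_sum fun i _ => neg_lap_mulVec_mul_le e u hW hb hc i
    _ = ∑ i, (outDeg W i * (b i / 2 * u i ^ 2 + e i ^ 2 / (2 * b i))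
          + (∑ j, W i j * c j) / 2 * u i ^ 2) + ∑ i, ∑ j, W i j * (e j ^ 2 / (2 * c j)) := by
      rw [← Finset.sum_add_distrib]
      refine Finset.sum_congr rfl fun i _ => ?_
      simp only [outDeg, Finset.sum_mul, Finset.sum_div, ← Finset.sum_add_distrib]
      exact Finset.sum_congr rfl fun j _ => by ring
    _ = _ := by
      rw [hWB.sum_sum_mul_right, ← Finset.sum_add_distrib]
      refine Finset.sum_congr rfl fun i _ => ?_
      ring

end LaplacianBound

/-- Lemma 1: for weight-balanced nonnegative `W`, `x = x̂ − e`,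
`u = −Lx̂`, and `bᵢ, cᵢ > 0`,
`xᵀLᵀu ≤ −∑ᵢ [δᵢ uᵢ² − (dᵢ/(2bᵢ) + dᵢ/(2cᵢ)) eᵢ²]`. -/
theorem stmt7 {N : ℕ} (W : Matrix (Fin N) (Fin N) ℝ) (hW : ∀ i j, 0 ≤ W i j)
    (hWB : IsWeightBalanced W) (xh e : Fin N → ℝ) (u : Fin N → ℝ)
    (hu : u = -(lap W *ᵥ xh)) (b c : Fin N → ℝ)
    (hb : ∀ i, 0 < b i) (hc : ∀ i, 0 < c i) :
    (lap W *ᵥ (xh - e)) ⬝ᵥ u ≤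
      -∑ i, (delta W b c i * (u i)^2
        - (outDeg W i / (2 * b i) + outDeg W i / (2 * c i)) * e i^2) := by
  have hLx : lap W *ᵥ xh = -u := by rw [hu, neg_neg]
  rw [mulVec_sub, hLx, sub_eq_add_neg, add_dotProduct]
  refine (add_le_add le_rfl (neg_lap_mulVec_dotProduct_le e u hW hWB hb hc)).trans_eq ?_
  simp only [dotProduct, delta, Pi.neg_apply, ← Finset.sum_neg_distrib, ← Finset.sum_add_distrib]
  exact Finset.sum_congr rfl fun i _ => by ring
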